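/- Let A be a finite set with distinguished elements x, ⊥, g and a copy of {1,...,k} (k prime, k > 5), and let T ⊆ {1,...,k} with |T| = ⌈4k/5⌉. Define v_T(S) = (1/40)·1[S \ {⊥,g} ≠ ∅] + 1[⊥ ∈ S] + 1[g ∈ S] + (1/(80k))·w(S), where w(S) = 0 if S = ∅; w(S) = 1 if 0 < |S \ {⊥,g,x}| < 4k/5 or S \ {⊥,g,x} ∈ cyclic(T); w(S) = 2 if |S \ {⊥,g,x}| > 4k/5 and S \ {⊥,g,x} ∉ cyclic(T). Then v_T is an XOS (fractionally subadditive) function. -/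

import Mathlib

/-- The action set of the hard instance: `⊥`, `g`, `x`, and `k` actions `1,…,k`. -/
inductive HardAction (k : ℕ) where
  | bot | g | x
  | act (i : Fin k)
deriving DecidableEq, Fintype

/-- All cyclic shifts of a subset `T` of `ℤ/k` (identified with `Fin k`). -/
def cyclicShifts {k : ℕ} (T : Finset (Fin k)) : Finset (Finset (Fin k)) :=
  Finset.univ.image (fun t : Fin k => T.image (fun j => j + t))

/-- The part of `S` coming from the `k` actions `1,…,k`, i.e. `S \ {⊥, g, x}`. -/
def kPart {k : ℕ} (S : Finset (HardAction k)) : Finset (Fin k) :=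
  Finset.univ.filter (fun i => HardAction.act i ∈ S)

/-- The inspection cost function `v_T` of the hard instance. -/
noncomputable def vT {k : ℕ} (T : Finset (Fin k)) (S : Finset (HardAction k)) : ℝ :=
  (if (S \ {HardAction.bot, HardAction.g}).Nonempty then 1/40 else 0)
  + (if HardAction.bot ∈ S then 1 else 0) + (if HardAction.g ∈ S then 1 else 0)
  + (1 / (80 * (k : ℝ))) *
    (if kPart S = ∅ then 0
     else if ((kPart S).card : ℝ) < 4 * (k : ℝ) / 5 ∨ kPart S ∈ cyclicShifts T then 1
     else 2)

/-!
A set function is XOS as soon as every set `S₀` carries a supporting function: a nonnegative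
additive function that agrees with `v` at `S₀` and lies below `v` everywhere; their maximum is
then `v`. Supporting functions add up and `1[⊥ ∈ S]`, `1[g ∈ S]` support themselves, so it remains
to support `u(S) = (1/40)·1[x ∈ S ∨ P ≠ ∅] + w(P)/(80k)`, where `P = S \ {⊥, g, x}`.
If `P₀ = ∅`, the point mass `1/40` at `x` does. Otherwise spread `u(S₀) = (2k + w(P₀))/(80k)`
uniformly over `P₀`; domination amounts to `|P ∩ P₀| (2k + w(P₀)) ≤ |P₀| (2k + w(P))`.
This is clear unless `w(P₀) = 2` and `w(P) = 1`, and then `P₀ ⊄ P`: `P₀` has at least `4k/5`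
elements, which rules out `|P| < 4k/5`, and if `P` is a shift of `T`, of size `⌈4k/5⌉`, then
`P₀ ⊆ P` would force `P₀ = P`, a set of weight `1`. Losing one element of `P₀` outweighs the gain
in weight, as `m (2k + 2) ≤ (m + 1) (2k + 1)` for `m ≤ k`.
-/

open Finset

section XOS

variable {α : Type*}

def IsXOS (v : Finset α → ℝ) : Prop :=
  ∃ (γs : Finset (α → ℝ)) (hne : γs.Nonempty),
    (∀ γ ∈ γs, ∀ a, 0 ≤ γ a) ∧ ∀ S, v S = γs.sup' hne (fun γ => ∑ a ∈ S, γ a)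

def IsSupportingAt (v : Finset α → ℝ) (S₀ : Finset α) (γ : α → ℝ) : Prop :=
  (∀ a, 0 ≤ γ a) ∧ ∑ a ∈ S₀, γ a = v S₀ ∧ ∀ S, ∑ a ∈ S, γ a ≤ v S

theorem IsSupportingAt.add {v₁ v₂ : Finset α → ℝ} {S₀ : Finset α} {γ₁ γ₂ : α → ℝ}
    (h₁ : IsSupportingAt v₁ S₀ γ₁) (h₂ : IsSupportingAt v₂ S₀ γ₂) :
    IsSupportingAt (v₁ + v₂) S₀ (γ₁ + γ₂) := by
  refine ⟨fun a => add_nonneg (h₁.1 a) (h₂.1 a), ?_, fun S => ?_⟩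
  · simp only [Pi.add_apply, sum_add_distrib, h₁.2.1, h₂.2.1]
  · simp only [Pi.add_apply, sum_add_distrib]
    exact add_le_add (h₁.2.2 S) (h₂.2.2 S)

theorem isSupportingAt_single [DecidableEq α] (a : α) {c : ℝ} (hc : 0 ≤ c) (S₀ : Finset α) :
    IsSupportingAt (fun S => if a ∈ S then c else 0) S₀ (Pi.single a c) := by
  refine ⟨fun b => ?_, sum_pi_single' a c S₀, fun S => (sum_pi_single' a c S).le⟩
  by_cases hb : b = a
  · subst hb; simpa using hc
  · simp [hb]

theorem IsXOS.of_forall_exists_isSupportingAt [Fintype α] {v : Finset α → ℝ}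
    (h : ∀ S₀, ∃ γ, IsSupportingAt v S₀ γ) : IsXOS v := by
  classical
  choose γ hγ using h
  refine ⟨univ.image γ, univ_nonempty.image γ, ?_, fun S => le_antisymm ?_ ?_⟩
  · simp only [mem_image, mem_univ, true_and, forall_exists_index, forall_apply_eq_imp_iff]
    exact fun S₀ => (hγ S₀).1
  · calc v S = ∑ a ∈ S, γ S a := ((hγ S).2.1).symm
      _ ≤ _ := le_sup' (fun γ => ∑ a ∈ S, γ a) (mem_image_of_mem γ (mem_univ S))
  · simp only [sup'_le_iff, mem_image, mem_univ, true_and, forall_exists_index,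
      forall_apply_eq_imp_iff]
    exact fun S₀ => (hγ S₀).2.2 S

end XOS

namespace HardAction

variable {k : ℕ}

noncomputable def weight (T P : Finset (Fin k)) : ℕ :=
  if P = ∅ then 0 else if (P.card : ℝ) < 4 * (k : ℝ) / 5 ∨ P ∈ cyclicShifts T then 1 else 2

theorem one_le_weight (T : Finset (Fin k)) {P : Finset (Fin k)} (hP : P.Nonempty) :
    1 ≤ weight T P := by
  unfold weight
  rw [if_neg hP.ne_empty]
  split_ifs <;> omega

theorem card_eq_of_mem_cyclicShifts {T P : Finset (Fin k)} (h : P ∈ cyclicShifts T) :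
    P.card = T.card := by
  obtain ⟨t, -, rfl⟩ := mem_image.mp h
  exact card_image_of_injective _ (add_left_injective t)

theorem ceil_four_mul_div_five_le {n : ℕ} (h : 4 * (k : ℝ) / 5 ≤ n) : ⌈(4 * (k : ℚ) / 5)⌉₊ ≤ n := by
  have h' : (4 * k : ℝ) ≤ 5 * n := by linarith
  have hQ : (4 * k : ℚ) ≤ 5 * n := by exact_mod_cast h'
  exact Nat.ceil_le.mpr (by linarith)

theorem card_inter_lt_of_weight_lt {T P P₀ : Finset (Fin k)}
    (hT : T.card = ⌈(4 * (k : ℚ) / 5)⌉₊) (hP : P.Nonempty)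
    (hw : weight T P < weight T P₀) : (P ∩ P₀).card < P₀.card := by
  have hP₀ : P₀ ≠ ∅ := by rintro rfl; simp [weight] at hw
  unfold weight at hw
  rw [if_neg hP.ne_empty, if_neg hP₀] at hw
  split_ifs at hw with hsmall hbig <;> try omega
  rw [not_or, not_lt] at hbig
  rcases hsmall with hsmall | hcyc
  · have : ((P ∩ P₀).card : ℝ) < P₀.card :=
      calc ((P ∩ P₀).card : ℝ) ≤ P.card := by exact_mod_cast card_le_card inter_subset_left
        _ < 4 * (k : ℝ) / 5 := hsmall
        _ ≤ P₀.card := hbig.1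
    exact_mod_cast this
  · refine (card_le_card inter_subset_right).lt_of_ne fun heq => hbig.2 ?_
    have hsub : P₀ ⊆ P := (eq_of_subset_of_card_le inter_subset_right heq.ge) ▸ inter_subset_left
    have hcard : P.card ≤ P₀.card := by
      rw [card_eq_of_mem_cyclicShifts hcyc, hT]
      exact ceil_four_mul_div_five_le hbig.1
    rwa [eq_of_subset_of_card_le hsub hcard]

theorem card_inter_mul_le {T P P₀ : Finset (Fin k)} (hT : T.card = ⌈(4 * (k : ℚ) / 5)⌉₊)
    (hP : P.Nonempty) :
    (P ∩ P₀).card * (2 * k + weight T P₀) ≤ P₀.card * (2 * k + weight T P) := by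
  have hinter : (P ∩ P₀).card ≤ P₀.card := card_le_card inter_subset_right
  rcases le_or_gt (weight T P₀) (weight T P) with hw | hw
  · exact Nat.mul_le_mul hinter (by omega)
  · have hlt := card_inter_lt_of_weight_lt hT hP hw
    have hk : (P ∩ P₀).card ≤ k := (card_le_univ _).trans (Fintype.card_fin k).le
    have hwP₀ : weight T P₀ ≤ 2 := by unfold weight; split_ifs <;> omega
    nlinarith [one_le_weight T hP]

noncomputable def vRest (T : Finset (Fin k)) (S : Finset (HardAction k)) : ℝ :=
  (if HardAction.x ∈ S ∨ (kPart S).Nonempty then 1 / 40 else 0) + weight T (kPart S) / (80 * k)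

theorem sdiff_bot_g_nonempty_iff (S : Finset (HardAction k)) :
    (S \ {bot, g}).Nonempty ↔ HardAction.x ∈ S ∨ (kPart S).Nonempty := by
  constructor
  · rintro ⟨a, ha⟩
    rw [mem_sdiff] at ha
    cases a with
    | bot | g => simp at ha
    | x => exact Or.inl ha.1
    | act j => exact Or.inr ⟨j, by simp [kPart, ha.1]⟩
  · rintro (hx | ⟨j, hj⟩)
    · exact ⟨HardAction.x, by simp [hx]⟩
    · exact ⟨act j, by simpa [kPart] using hj⟩

theorem vT_eq_add (T : Finset (Fin k)) :
    vT T = (fun S => if bot ∈ S then 1 else 0) + (fun S => if g ∈ S then 1 else 0) + vRest T := by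
  ext S
  simp only [vT, vRest, weight, sdiff_bot_g_nonempty_iff, Pi.add_apply]
  split_ifs <;> simp only [Nat.cast_ofNat, Nat.cast_one, Nat.cast_zero] <;> ring

theorem vRest_nonneg (T : Finset (Fin k)) (S : Finset (HardAction k)) : 0 ≤ vRest T S := by
  unfold vRest
  split_ifs <;> positivity

theorem vRest_of_nonempty (T : Finset (Fin k)) {S : Finset (HardAction k)}
    (hS : (kPart S).Nonempty) : vRest T S = (2 * k + weight T (kPart S)) / (80 * k) := by
  have hk : (k : ℝ) ≠ 0 := by exact_mod_cast hS.choose.pos.ne'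
  rw [vRest, if_pos (Or.inr hS)]
  field_simp
  ring

def onActs (f : Fin k → ℝ) : HardAction k → ℝ
  | act j => f j
  | _ => 0

theorem sum_onActs (f : Fin k → ℝ) (S : Finset (HardAction k)) :
    ∑ a ∈ S, onActs f a = ∑ j ∈ kPart S, f j := by
  have hkPart : kPart S = S.preimage act (Set.injOn_of_injective fun _ _ => act.inj) := by
    ext; simp [kPart]
  rw [hkPart, ← sum_preimage act S _ (onActs f)]
  · rfl
  · rintro (_ | _ | _ | j) - hj
    exacts [rfl, rfl, rfl, absurd ⟨j, rfl⟩ hj]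

theorem isSupportingAt_vRest_of_eq_empty (T : Finset (Fin k)) {S₀ : Finset (HardAction k)}
    (hS₀ : kPart S₀ = ∅) : IsSupportingAt (vRest T) S₀ (Pi.single HardAction.x (1 / 40)) := by
  refine ⟨(isSupportingAt_single _ (by norm_num) S₀).1, ?_, fun S => ?_⟩
  · simp [sum_pi_single', vRest, hS₀, weight]
  · rw [sum_pi_single', vRest]
    have : (0 : ℝ) ≤ weight T (kPart S) / (80 * k) := by positivity
    split_ifs with hx hxP
    · linarith
    · exact absurd (Or.inl hx) hxP
    all_goals linarith

theorem isSupportingAt_vRest_of_nonempty {T : Finset (Fin k)}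
    (hT : T.card = ⌈(4 * (k : ℚ) / 5)⌉₊) {S₀ : Finset (HardAction k)}
    (hS₀ : (kPart S₀).Nonempty) :
    IsSupportingAt (vRest T) S₀
      (onActs fun j => if j ∈ kPart S₀ then vRest T S₀ / (kPart S₀).card else 0) := by
  have hsum (S : Finset (HardAction k)) :
      ∑ a ∈ S, onActs (fun j => if j ∈ kPart S₀ then vRest T S₀ / (kPart S₀).card else 0) a
        = (kPart S ∩ kPart S₀).card * (vRest T S₀ / (kPart S₀).card) := by
    rw [sum_onActs, sum_ite_mem, sum_const, nsmul_eq_mul]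
  have hcard : (0 : ℝ) < (kPart S₀).card := by exact_mod_cast hS₀.card_pos
  refine ⟨fun a => ?_, ?_, fun S => ?_⟩
  · cases a with
    | act j =>
      simp only [onActs]
      split_ifs
      exacts [div_nonneg (vRest_nonneg T S₀) hcard.le, le_rfl]
    | _ => exact le_rfl
  · rw [hsum, inter_self]
    field_simp
  · rw [hsum]
    rcases (kPart S ∩ kPart S₀).eq_empty_or_nonempty with h | h
    · simpa [h] using vRest_nonneg T S
    have hS : (kPart S).Nonempty := h.mono inter_subset_left
    have hk : (0 : ℝ) < k := by exact_mod_cast hS.choose.pos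
    have hkey : ((kPart S ∩ kPart S₀).card : ℝ) * (2 * k + weight T (kPart S₀))
        ≤ (kPart S₀).card * (2 * k + weight T (kPart S)) := by
      exact_mod_cast card_inter_mul_le hT hS
    rw [vRest_of_nonempty T hS, vRest_of_nonempty T hS₀, mul_div_assoc', div_le_iff₀ hcard,
      ← mul_div_assoc, div_mul_eq_mul_div]
    gcongr ?_ / _
    linarith

end HardAction

open HardAction in
theorem stmt8_general (k : ℕ) (T : Finset (Fin k)) (hT : T.card = ⌈(4 * (k : ℚ) / 5)⌉₊) :
    ∃ (γs : Finset (HardAction k → ℝ)) (hne : γs.Nonempty),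
      (∀ γ ∈ γs, ∀ a, 0 ≤ γ a) ∧
      ∀ S : Finset (HardAction k), vT T S = γs.sup' hne (fun γ => ∑ a ∈ S, γ a) := by
  show IsXOS (vT T)
  rw [vT_eq_add]
  refine IsXOS.of_forall_exists_isSupportingAt fun S₀ => ?_
  obtain ⟨γ, hγ⟩ : ∃ γ, IsSupportingAt (vRest T) S₀ γ := by
    rcases (kPart S₀).eq_empty_or_nonempty with h | h
    exacts [⟨_, isSupportingAt_vRest_of_eq_empty T h⟩, ⟨_, isSupportingAt_vRest_of_nonempty hT h⟩]
  exact ⟨_, ((isSupportingAt_single bot zero_le_one S₀).add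
    (isSupportingAt_single g zero_le_one S₀)).add hγ⟩

/-- `v_T` is XOS: a pointwise maximum of finitely many nonnegative additive functions. -/
theorem stmt8 (k : ℕ) (hk : Nat.Prime k) (hk5 : 5 < k)
    (T : Finset (Fin k)) (hT : T.card = ⌈(4 * (k : ℚ) / 5)⌉₊) :
    ∃ (γs : Finset (HardAction k → ℝ)) (hne : γs.Nonempty),
      (∀ γ ∈ γs, ∀ a, 0 ≤ γ a) ∧
      ∀ S : Finset (HardAction k), vT T S = γs.sup' hne (fun γ => ∑ a ∈ S, γ a) :=
  stmt8_general k T hT
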